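/- For every positive integer n, D(n) is equal to the number of nonempty subsets A of {1, 2, ..., n} such that gcd(A) divides n. Moreover, for every positive integer n ≥ 1, D(n) + d(n) + 1 ≡ 0 (mod 3), where d(n) is the number of positive divisors of n. -/

import Mathlib

/-!
Sorting the nonempty subsets of `{1, …, m}` by their gcd `g` and dividing such a subset through
by `g` gives `∑_{g ∣ n} f (n / g)` subsets whose gcd divides `n`, and
`2 ^ m - 1 = ∑_{0 < g ≤ m} f (m / g)`. In the latter sum the terms with `m / 2 < g` are `f 1 = 1`,
and by strong induction those with `2 ≤ g ≤ m / 2` are `≡ 2 (mod 3)`; comparing with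
`2 ^ m ≡ (-1) ^ m` gives `f m ≡ 2 (mod 3)` for every `m ≥ 2`, hence `D n ≡ 1 + 2 (d(n) - 1)`.
-/

/-- `f n` is the number of nonempty relatively prime subsets of `{1, ..., n}`. -/
def f (n : ℕ) : ℕ :=
  ((Finset.Icc 1 n).powerset.filter fun A => A.Nonempty ∧ A.gcd id = 1).card

/-- `D n = ∑_{d ∣ n} f d` is the divisor sum of `f`. -/
def D (n : ℕ) : ℕ := ∑ d ∈ n.divisors, f d

open Finset

def subsetsWithGcd (m g : ℕ) : Finset (Finset ℕ) :=
  (Icc 1 m).powerset.filter fun A => A.Nonempty ∧ A.gcd id = g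

lemma f_one : f 1 = 1 := by decide

lemma gcd_image_mul_left (g : ℕ) (B : Finset ℕ) : (B.image (g * ·)).gcd id = g * B.gcd id := by
  rw [gcd_image, Function.id_comp, Finset.gcd_mul_left, normalize_eq]
  rfl

lemma image_mul_subset_Icc_iff {g : ℕ} (hg : 0 < g) (m : ℕ) (B : Finset ℕ) :
    B.image (g * ·) ⊆ Icc 1 m ↔ B ⊆ Icc 1 (m / g) := by
  simp [subset_iff, Nat.le_div_iff_mul_le hg, mul_comm g, Nat.one_le_iff_ne_zero, hg.ne']

lemma image_mul_image_div {g : ℕ} {A : Finset ℕ} (hA : ∀ a ∈ A, g ∣ a) :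
    (A.image (· / g)).image (g * ·) = A := by
  rw [image_image]
  exact (image_congr fun a ha => Nat.mul_div_cancel' (hA a ha)).trans image_id

lemma image_div_image_mul {g : ℕ} (hg : 0 < g) (B : Finset ℕ) :
    (B.image (g * ·)).image (· / g) = B := by
  rw [image_image]
  exact (image_congr fun b _ => Nat.mul_div_cancel_left b hg).trans image_id

lemma card_subsetsWithGcd {g : ℕ} (hg : 0 < g) (m : ℕ) :
    (subsetsWithGcd m g).card = f (m / g) := by
  have hdvd {A : Finset ℕ} (hA : A.gcd id = g) : ∀ a ∈ A, g ∣ a := fun _ ha => hA ▸ gcd_dvd ha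
  refine card_nbij' (·.image (· / g)) (·.image (g * ·)) ?_ ?_ ?_ ?_
  · rintro A hA
    simp only [subsetsWithGcd, coe_filter, mem_powerset, Set.mem_ofPred_eq] at hA ⊢
    obtain ⟨hsub, hne, hgcd⟩ := hA
    have hA := image_mul_image_div (hdvd hgcd)
    rw [← hA, image_mul_subset_Icc_iff hg] at hsub
    rw [← hA, gcd_image_mul_left, mul_eq_left₀ hg.ne'] at hgcd
    exact ⟨hsub, hne.image _, hgcd⟩
  · rintro B hB
    simp only [subsetsWithGcd, coe_filter, mem_powerset, Set.mem_ofPred_eq] at hB ⊢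
    obtain ⟨hsub, hne, hgcd⟩ := hB
    rw [image_mul_subset_Icc_iff hg, gcd_image_mul_left, hgcd, mul_one]
    exact ⟨hsub, hne.image _, rfl⟩
  · rintro A hA
    exact image_mul_image_div (hdvd (mem_filter.mp hA).2.2)
  · rintro B _
    exact image_div_image_mul hg B

lemma card_filter_gcd_mem (m : ℕ) {t : Finset ℕ} (ht : 0 ∉ t) :
    ((Icc 1 m).powerset.filter fun A => A.Nonempty ∧ A.gcd id ∈ t).card
      = ∑ g ∈ t, f (m / g) := by
  rw [card_eq_sum_card_fiberwise (f := (·.gcd id)) fun A hA => (mem_filter.mp hA).2.2]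
  refine sum_congr rfl fun g hg => ?_
  rw [← card_subsetsWithGcd (Nat.pos_of_ne_zero fun h => ht (h ▸ hg)), filter_filter]
  congr 1
  exact filter_congr fun A _ => ⟨fun ⟨⟨hne, _⟩, hgcd⟩ => ⟨hne, hgcd⟩,
    fun ⟨hne, hgcd⟩ => ⟨⟨hne, hgcd ▸ hg⟩, hgcd⟩⟩

lemma sum_f_div_eq_two_pow_sub_one (m : ℕ) : ∑ g ∈ Ioc 0 m, f (m / g) = 2 ^ m - 1 := by
  rw [← card_filter_gcd_mem m (by simp)]
  have hgcd_mem {A : Finset ℕ} (hsub : A ⊆ Icc 1 m) (hne : A.Nonempty) : A.gcd id ∈ Ioc 0 m := by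
    obtain ⟨a, ha⟩ := hne
    have ha' := mem_Icc.mp (hsub ha)
    have hdvd : A.gcd id ∣ a := gcd_dvd ha
    exact mem_Ioc.mpr ⟨Nat.pos_of_dvd_of_pos hdvd ha'.1, (Nat.le_of_dvd ha'.1 hdvd).trans ha'.2⟩
  have hnonempty : ((Icc 1 m).powerset.filter fun A => A.Nonempty ∧ A.gcd id ∈ Ioc 0 m)
      = (Icc 1 m).powerset.erase ∅ := by
    ext A
    simp only [mem_filter, mem_powerset, mem_erase, ← nonempty_iff_ne_empty]
    exact ⟨fun ⟨hsub, hne, _⟩ => ⟨hne, hsub⟩, fun ⟨hne, hsub⟩ => ⟨hsub, hne, hgcd_mem hsub hne⟩⟩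
  rw [hnonempty, card_erase_of_mem (empty_mem_powerset _), card_powerset, Nat.card_Icc,
    Nat.add_sub_cancel]

lemma sum_mod_eq_card_mul {ι : Type*} {s : Finset ι} {u : ι → ℕ} {k c : ℕ}
    (h : ∀ i ∈ s, u i % k = c) : (∑ i ∈ s, u i) % k = s.card * c % k := by
  rw [sum_nat_mod, sum_congr rfl h, sum_const, smul_eq_mul]

lemma two_pow_mod_three (m : ℕ) : 2 ^ m % 3 = if m % 2 = 0 then 1 else 2 := by
  induction m with
  | zero => rfl
  | succ k ih =>
    rw [pow_succ, Nat.mul_mod, ih]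
    split_ifs <;> omega

lemma f_mod_three {m : ℕ} (hm : 2 ≤ m) : f m % 3 = 2 := by
  induction m using Nat.strong_induction_on with | _ m ih =>
  have hsplit : ∑ g ∈ Ioc 0 m, f (m / g)
      = f m + ∑ g ∈ Ioc 1 (m / 2), f (m / g) + ∑ g ∈ Ioc (m / 2) m, f (m / g) := by
    rw [← sum_Ioc_consecutive _ zero_le_one (by omega : 1 ≤ m),
      ← sum_Ioc_consecutive _ (by omega : 1 ≤ m / 2) (Nat.div_le_self m 2),
      show Ioc 0 1 = {1} from Nat.Ioc_succ_singleton 0, sum_singleton, Nat.div_one, add_assoc]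
  have hsmall : (∑ g ∈ Ioc 1 (m / 2), f (m / g)) % 3 = (m / 2 - 1) * 2 % 3 := by
    rw [sum_mod_eq_card_mul fun g hg => ?_, Nat.card_Ioc]
    obtain ⟨hg1, hg2⟩ := mem_Ioc.mp hg
    have h2 : 2 ≤ m / g := (Nat.le_div_iff_mul_le (by omega)).mpr (by omega)
    exact ih _ (Nat.div_lt_self (by omega) hg1) h2
  have hlarge : ∑ g ∈ Ioc (m / 2) m, f (m / g) = m - m / 2 := by
    rw [sum_congr rfl fun g hg => ?_, sum_const, Nat.card_Ioc, smul_eq_mul, mul_one]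
    obtain ⟨hg1, hg2⟩ := mem_Ioc.mp hg
    rw [Nat.div_eq_of_lt_le (k := 1) (by omega) (by omega), f_one]
  have hsum := sum_f_div_eq_two_pow_sub_one m
  have hpos := Nat.one_le_two_pow (n := m)
  have hpow := two_pow_mod_three m
  split_ifs at hpow <;> omega

lemma sum_f_add_one_mod_three {s : Finset ℕ} (hs0 : 0 ∉ s) (hs1 : 1 ∈ s) :
    (∑ d ∈ s, f d + 1) % 3 = 2 * s.card % 3 := by
  have hrest : (∑ d ∈ s.erase 1, f d) % 3 = (s.erase 1).card * 2 % 3 :=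
    sum_mod_eq_card_mul fun d hd => f_mod_three <|
      (Nat.two_le_iff d).mpr ⟨ne_of_mem_of_not_mem (mem_of_mem_erase hd) hs0, ne_of_mem_erase hd⟩
  have hcard := card_erase_add_one hs1
  rw [← add_sum_erase s f hs1, f_one]
  omega

/-- `D(n)` counts the nonempty subsets `A` of `{1, ..., n}` with `gcd(A) ∣ n`; moreover
`D(n) + d(n) + 1 ≡ 0 (mod 3)`, where `d(n)` is the number of positive divisors of `n`. -/
theorem D_count_and_congruence (n : ℕ) (hn : 0 < n) :
    D n = ((Finset.Icc 1 n).powerset.filter fun A => A.Nonempty ∧ A.gcd id ∣ n).card ∧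
    (D n + n.divisors.card + 1) % 3 = 0 := by
  constructor
  · rw [D, ← Nat.sum_div_divisors, ← card_filter_gcd_mem n (by simp)]
    simp only [Nat.mem_divisors, hn.ne', ne_eq, not_false_eq_true, and_true]
  · have hmod := sum_f_add_one_mod_three (s := n.divisors) (by simp)
      (Nat.one_mem_divisors.mpr hn.ne')
    rw [D]
    omega
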